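/- arXiv:math/0702102 — 3 statements merged into one kernel-verified Lean document; each statement's English description precedes it below -/
import Mathlib

section
/- Let {K_t} and {L_t} be linear parameter systems in R^n along the same direction v, containing the origin, generated by (n+1)-dimensional convex bodies K̃ and L̃ respectively. Then for all t and p ≥ 1, the p-sum K_t +_p L_t equals the projection of K̃ +_p L̃ onto e_{n+1}^⊥ along e_{n+1} − t v. Consequently {K_t +_p L_t} is a linear parameter system along v. -/
open MeasureTheory Set Real Pointwise Filter

noncomputable section

/-- Euclidean space ℝⁿ. -/
abbrev E (n : ℕ) := EuclideanSpace ℝ (Fin n)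

/-- The support function of a set `K`: `h_K(u) = sup_{x ∈ K} ⟨x, u⟩`. -/
noncomputable def supp {n : ℕ} (K : Set (E n)) (u : E n) : ℝ :=
  sSup ((fun x => (inner ℝ x u : ℝ)) '' K)

/-- The Firey `p`-sum of `K` and `L` (both containing the origin): the convex body
whose support function is `(h_K ^ p + h_L ^ p) ^ (1/p)`. -/
noncomputable def pSum {n : ℕ} (K L : Set (E n)) (p : ℝ) : Set (E n) :=
  {x | ∀ u : E n, (inner ℝ x u : ℝ) ≤ (supp K u ^ p + supp L u ^ p) ^ (1 / p)}

end

/-!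
The projection along `e - t v` is a linear map `A`, and the support function of a linear image
is `h_{A K}(u) = h_K(A* u)`. By Minkowski's inequality `(h_K ^ p + h_L ^ p) ^ (1/p)` is sublinear,
so by Hahn–Banach it is the support function of `K +_p L`; hence `A K +_p A L` and `A (K +_p L)`
have the same support function, and both are compact convex sets, so they coincide. The linear
parameter system is then the one generated by the fixed body `K +_p L`.
-/

open scoped InnerProductSpace

section SupportFunction

variable {m : ℕ} {K : Set (E m)}

lemma inner_le_supp (hK : IsCompact K) {x : E m} (hx : x ∈ K) (u : E m) :
    ⟪x, u⟫_ℝ ≤ supp K u :=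
  le_csSup ((hK.image (continuous_id.inner continuous_const)).bddAbove) (mem_image_of_mem _ hx)

lemma supp_le (hne : K.Nonempty) {u : E m} {c : ℝ} (h : ∀ x ∈ K, ⟪x, u⟫_ℝ ≤ c) :
    supp K u ≤ c :=
  csSup_le (hne.image _) (forall_mem_image.2 h)

lemma supp_nonneg (hK : IsCompact K) (h0 : (0 : E m) ∈ K) (u : E m) : 0 ≤ supp K u := by
  simpa using inner_le_supp hK h0 u

lemma supp_add_le (hK : IsCompact K) (hne : K.Nonempty) (u w : E m) :
    supp K (u + w) ≤ supp K u + supp K w :=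
  supp_le hne fun x hx => by
    rw [inner_add_right]
    exact add_le_add (inner_le_supp hK hx u) (inner_le_supp hK hx w)

lemma supp_smul (K : Set (E m)) {c : ℝ} (hc : 0 ≤ c) (u : E m) :
    supp K (c • u) = c * supp K u := by
  have : (fun x => ⟪x, c • u⟫_ℝ) '' K = c • (fun x => ⟪x, u⟫_ℝ) '' K := by
    rw [← image_smul, image_image]
    simp only [real_inner_smul_right, smul_eq_mul]
  rw [supp, this, Real.sSup_smul_of_nonneg hc, smul_eq_mul, supp]

lemma exists_supp_le_mul_norm (hK : IsCompact K) (hne : K.Nonempty) :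
    ∃ C : ℝ, ∀ u : E m, supp K u ≤ C * ‖u‖ := by
  obtain ⟨C, hC⟩ := hK.isBounded.exists_norm_le
  exact ⟨C, fun u => supp_le hne fun x hx =>
    (real_inner_le_norm x u).trans (mul_le_mul_of_nonneg_right (hC x hx) (norm_nonneg u))⟩

lemma supp_image {k : ℕ} (A : E m →L[ℝ] E k) (K : Set (E m)) (u : E k) :
    supp (A '' K) u = supp K (A.adjoint u) := by
  simp only [supp, image_image, ContinuousLinearMap.adjoint_inner_right]

lemma mem_iff_forall_inner_le_supp (hco : Convex ℝ K) (hcp : IsCompact K) (hne : K.Nonempty)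
    {x : E m} : x ∈ K ↔ ∀ u : E m, ⟪x, u⟫_ℝ ≤ supp K u := by
  refine ⟨fun hx u => inner_le_supp hcp hx u, fun hx => ?_⟩
  by_contra hxK
  obtain ⟨f, s, hfK, hsx⟩ := geometric_hahn_banach_closed_point hco hcp.isClosed hxK
  set y : E m := (InnerProductSpace.toDual ℝ (E m)).symm f
  have hy : ∀ w : E m, ⟪w, y⟫_ℝ = f w := fun w => by
    rw [real_inner_comm]; exact InnerProductSpace.toDual_symm_apply
  have hsupp : supp K y ≤ s := supp_le hne fun a ha => (hy a).trans_le (hfK a ha).le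
  exact (hsx.trans_le ((hy x).symm.trans_le ((hx y).trans hsupp))).false

end SupportFunction

section Sublinear

variable {m : ℕ} {N : E m → ℝ}

lemma convex_setOf_forall_inner_le (N : E m → ℝ) :
    Convex ℝ {x : E m | ∀ u, ⟪x, u⟫_ℝ ≤ N u} := by
  rw [ofPred_forall]
  exact convex_iInter fun u => convex_halfSpace_le
    ⟨fun x y => inner_add_left x y u, fun c x => real_inner_smul_left x u c⟩ _

lemma isClosed_setOf_forall_inner_le (N : E m → ℝ) :
    IsClosed {x : E m | ∀ u, ⟪x, u⟫_ℝ ≤ N u} := by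
  rw [ofPred_forall]
  exact isClosed_iInter fun u => isClosed_le (by fun_prop) continuous_const

lemma isBounded_setOf_forall_inner_le {R : ℝ} (hN : ∀ u, N u ≤ R * ‖u‖) :
    Bornology.IsBounded {x : E m | ∀ u, ⟪x, u⟫_ℝ ≤ N u} := by
  refine isBounded_iff_forall_norm_le.2 ⟨max R 0, fun x hx => ?_⟩
  have hxx : ‖x‖ * ‖x‖ ≤ R * ‖x‖ := by
    rw [← real_inner_self_eq_norm_mul_norm]; exact (hx x).trans (hN x)
  nlinarith [norm_nonneg x, le_max_left R 0, le_max_right R 0]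

variable (N_hom : ∀ c : ℝ, 0 < c → ∀ x, N (c • x) = c * N x)

include N_hom in
lemma map_zero_of_posHomogeneous : N 0 = 0 := by
  have := N_hom 2 two_pos 0
  rw [smul_zero] at this
  linarith

variable (N_add : ∀ x y, N (x + y) ≤ N x + N y)
include N_hom N_add

lemma mul_le_of_sublinear (u : E m) (c : ℝ) : c * N u ≤ N (c • u) := by
  have N_zero := map_zero_of_posHomogeneous N_hom
  rcases lt_trichotomy c 0 with hc | rfl | hc
  · have := N_add (c • u) ((-c) • u)
    rw [← add_smul, add_neg_cancel, zero_smul, N_zero, N_hom (-c) (neg_pos.2 hc)] at this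
    linarith
  · simp [N_zero]
  · exact (N_hom c hc u).ge

lemma exists_forall_inner_le_and_inner_eq (u : E m) :
    ∃ z : E m, (∀ w, ⟪z, w⟫_ℝ ≤ N w) ∧ ⟪z, u⟫_ℝ = N u := by
  have hker : ∀ c : ℝ, c • u = 0 → c • N u = 0 := by
    intro c hcu
    rcases smul_eq_zero.1 hcu with rfl | rfl
    · exact zero_smul ℝ _
    · rw [map_zero_of_posHomogeneous N_hom, smul_zero]
  set f : E m →ₗ.[ℝ] ℝ := LinearPMap.mkSpanSingleton' u (N u) hker
  have hf : ∀ z : f.domain, f z ≤ N z := by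
    rintro ⟨z, hz⟩
    obtain ⟨c, rfl⟩ := Submodule.mem_span_singleton.1 hz
    rw [LinearPMap.mkSpanSingleton'_apply]
    exact mul_le_of_sublinear N_hom N_add u c
  obtain ⟨g, hgf, hgN⟩ := exists_extension_of_le_sublinear f N N_hom N_add hf
  refine ⟨(InnerProductSpace.toDual ℝ (E m)).symm (LinearMap.toContinuousLinearMap g),
    fun w => ?_, ?_⟩
  · rw [InnerProductSpace.toDual_symm_apply]; exact hgN w
  · rw [InnerProductSpace.toDual_symm_apply, LinearMap.coe_toContinuousLinearMap',
      hgf ⟨u, Submodule.mem_span_singleton_self u⟩]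
    exact LinearPMap.mkSpanSingleton'_apply_self _ _ _ _

lemma supp_setOf_forall_inner_le (u : E m) :
    supp {x : E m | ∀ w, ⟪x, w⟫_ℝ ≤ N w} u = N u := by
  obtain ⟨z, hz, hzu⟩ := exists_forall_inner_le_and_inner_eq N_hom N_add u
  exact IsGreatest.csSup_eq ⟨⟨z, hz, hzu⟩, forall_mem_image.2 fun x hx => hx u⟩

end Sublinear

lemma Real.rpow_add_rpow_add_le {a b c d p : ℝ} (hp : 1 ≤ p) (ha : 0 ≤ a) (hb : 0 ≤ b)
    (hc : 0 ≤ c) (hd : 0 ≤ d) :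
    ((a + c) ^ p + (b + d) ^ p) ^ (1 / p) ≤
      (a ^ p + b ^ p) ^ (1 / p) + (c ^ p + d ^ p) ^ (1 / p) := by
  have h := Real.Lp_add_le_of_nonneg (s := Finset.univ) (f := ![a, b]) (g := ![c, d]) hp
    (by simp [Fin.forall_fin_two, ha, hb]) (by simp [Fin.forall_fin_two, hc, hd])
  simpa [Fin.sum_univ_two] using h

section PSum

variable {m : ℕ} {K L : Set (E m)} {p : ℝ}

noncomputable def pSupp (K L : Set (E m)) (p : ℝ) (u : E m) : ℝ :=
  (supp K u ^ p + supp L u ^ p) ^ (1 / p)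

lemma pSupp_image {k : ℕ} (A : E m →L[ℝ] E k) (K L : Set (E m)) (p : ℝ) (u : E k) :
    pSupp (A '' K) (A '' L) p u = pSupp K L p (A.adjoint u) := by
  simp only [pSupp, supp_image]

lemma convex_pSum (K L : Set (E m)) (p : ℝ) : Convex ℝ (pSum K L p) :=
  convex_setOf_forall_inner_le (pSupp K L p)

variable (hK : IsCompact K) (h0K : (0 : E m) ∈ K) (hL : IsCompact L) (h0L : (0 : E m) ∈ L)
include hK h0K hL h0L

lemma pSupp_smul (hp : 0 < p) {c : ℝ} (hc : 0 < c) (u : E m) :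
    pSupp K L p (c • u) = c * pSupp K L p u := by
  have hKu := supp_nonneg hK h0K u
  have hLu := supp_nonneg hL h0L u
  rw [pSupp, pSupp, supp_smul K hc.le, supp_smul L hc.le, mul_rpow hc.le hKu,
    mul_rpow hc.le hLu, ← mul_add, mul_rpow (by positivity) (by positivity),
    ← rpow_mul hc.le, mul_one_div_cancel hp.ne', rpow_one]

lemma pSupp_add_le (hp : 1 ≤ p) (u w : E m) :
    pSupp K L p (u + w) ≤ pSupp K L p u + pSupp K L p w := by
  have := supp_nonneg hK h0K (u + w)
  have := supp_nonneg hL h0L (u + w)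
  calc pSupp K L p (u + w)
      ≤ ((supp K u + supp K w) ^ p + (supp L u + supp L w) ^ p) ^ (1 / p) := by
        unfold pSupp
        gcongr
        exacts [supp_add_le hK ⟨0, h0K⟩ u w, supp_add_le hL ⟨0, h0L⟩ u w]
    _ ≤ pSupp K L p u + pSupp K L p w :=
        Real.rpow_add_rpow_add_le hp (supp_nonneg hK h0K u) (supp_nonneg hL h0L u)
          (supp_nonneg hK h0K w) (supp_nonneg hL h0L w)

lemma exists_pSupp_le_mul_norm (hp : 1 ≤ p) :
    ∃ R : ℝ, ∀ u, pSupp K L p u ≤ R * ‖u‖ := by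
  obtain ⟨CK, hCK⟩ := exists_supp_le_mul_norm hK ⟨0, h0K⟩
  obtain ⟨CL, hCL⟩ := exists_supp_le_mul_norm hL ⟨0, h0L⟩
  refine ⟨CK + CL, fun u => ?_⟩
  calc pSupp K L p u ≤ supp K u + supp L u :=
        rpow_add_rpow_le_add (supp_nonneg hK h0K u) (supp_nonneg hL h0L u) hp
    _ ≤ (CK + CL) * ‖u‖ := by linarith [hCK u, hCL u]

lemma supp_pSum (hp : 1 ≤ p) (u : E m) : supp (pSum K L p) u = pSupp K L p u :=
  supp_setOf_forall_inner_le (fun _ hc => pSupp_smul hK h0K hL h0L (by linarith) hc)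
    (pSupp_add_le hK h0K hL h0L hp) u

lemma isCompact_pSum (hp : 1 ≤ p) : IsCompact (pSum K L p) :=
  let ⟨_, hR⟩ := exists_pSupp_le_mul_norm hK h0K hL h0L hp
  Metric.isCompact_of_isClosed_isBounded (isClosed_setOf_forall_inner_le _)
    (isBounded_setOf_forall_inner_le hR)

lemma pSum_image (hp : 1 ≤ p) {k : ℕ} (A : E m →L[ℝ] E k) :
    pSum (A '' K) (A '' L) p = A '' pSum K L p := by
  have h0 : (0 : E m) ∈ pSum K L p := fun u => by
    have := supp_nonneg hK h0K u
    have := supp_nonneg hL h0L u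
    rw [inner_zero_left]
    positivity
  have hconv : Convex ℝ (A '' pSum K L p) := (convex_pSum K L p).linear_image A.toLinearMap
  ext x
  rw [mem_iff_forall_inner_le_supp hconv
    ((isCompact_pSum hK h0K hL h0L hp).image A.continuous) ⟨A 0, mem_image_of_mem A h0⟩]
  refine forall_congr' fun u => ?_
  change ⟪x, u⟫_ℝ ≤ pSupp (A '' K) (A '' L) p u ↔ _
  rw [pSupp_image, supp_image, supp_pSum hK h0K hL h0L hp]

end PSum

theorem pSum_lps_general {n : ℕ} (Kt Lt : Set (E (n + 1)))
    (hKcp : IsCompact Kt) (h0K : (0 : E (n + 1)) ∈ Kt)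
    (hLcp : IsCompact Lt) (h0L : (0 : E (n + 1)) ∈ Lt)
    (e : E (n + 1))
    (v : E (n + 1)) (p : ℝ) (hp : 1 ≤ p) :
    (∀ t : ℝ,
      pSum ((fun z : E (n + 1) => z - (inner ℝ z e : ℝ) • (e - t • v)) '' Kt)
           ((fun z : E (n + 1) => z - (inner ℝ z e : ℝ) • (e - t • v)) '' Lt) p
        = (fun z : E (n + 1) => z - (inner ℝ z e : ℝ) • (e - t • v)) '' pSum Kt Lt p) ∧
    ∃ M : Set (E (n + 1)), Convex ℝ M ∧ IsCompact M ∧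
      ∀ t : ℝ,
        pSum ((fun z : E (n + 1) => z - (inner ℝ z e : ℝ) • (e - t • v)) '' Kt)
             ((fun z : E (n + 1) => z - (inner ℝ z e : ℝ) • (e - t • v)) '' Lt) p
          = (fun z : E (n + 1) => z - (inner ℝ z e : ℝ) • (e - t • v)) '' M := by
  have hproj : ∀ t : ℝ, (fun z : E (n + 1) => z - ⟪z, e⟫_ℝ • (e - t • v)) =
      ⇑(ContinuousLinearMap.id ℝ (E (n + 1)) - (innerSL ℝ e).smulRight (e - t • v)) := by
    intro t
    ext z : 1
    simp [real_inner_comm]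
  refine ⟨fun t => ?_, pSum Kt Lt p, convex_pSum Kt Lt p, isCompact_pSum hKcp h0K hLcp h0L hp,
    fun t => ?_⟩ <;>
  · rw [hproj t]
    exact pSum_image hKcp h0K hLcp h0L hp _

/-- The `p`-sum of two linear parameter systems along the same direction `v` is the
projection of the `p`-sum of the generating bodies, hence again a linear parameter system. -/
theorem pSum_lps {n : ℕ} (Kt Lt : Set (E (n + 1)))
    (hKco : Convex ℝ Kt) (hKcp : IsCompact Kt) (h0K : (0 : E (n + 1)) ∈ Kt)
    (hLco : Convex ℝ Lt) (hLcp : IsCompact Lt) (h0L : (0 : E (n + 1)) ∈ Lt)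
    (e : E (n + 1)) (he : e = EuclideanSpace.single (Fin.last n) 1)
    (v : E (n + 1)) (hv : (inner ℝ v e : ℝ) = 0) (p : ℝ) (hp : 1 ≤ p) :
    (∀ t : ℝ,
      pSum ((fun z : E (n + 1) => z - (inner ℝ z e : ℝ) • (e - t • v)) '' Kt)
           ((fun z : E (n + 1) => z - (inner ℝ z e : ℝ) • (e - t • v)) '' Lt) p
        = (fun z : E (n + 1) => z - (inner ℝ z e : ℝ) • (e - t • v)) '' pSum Kt Lt p) ∧
    ∃ M : Set (E (n + 1)), Convex ℝ M ∧ IsCompact M ∧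
      ∀ t : ℝ,
        pSum ((fun z : E (n + 1) => z - (inner ℝ z e : ℝ) • (e - t • v)) '' Kt)
             ((fun z : E (n + 1) => z - (inner ℝ z e : ℝ) • (e - t • v)) '' Lt) p
          = (fun z : E (n + 1) => z - (inner ℝ z e : ℝ) • (e - t • v)) '' M :=
  pSum_lps_general Kt Lt hKcp h0K hLcp h0L e v p hp
end

section
/- For a linear parameter system {K_t} in R^n (K_t = conv{x_i + λ_i t v : i ∈ I}), the n-dimensional volume V_n(K_t) is a convex function of t. -/
open MeasureTheory Set Real Pointwise Filter

/-!
Write `K_t` as the image of the fixed convex set `conv {(xᵢ, λᵢ)} ⊆ ℝⁿ × ℝ` under the linear map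
`(z, s) ↦ z + (s t) v`. After a linear change of coordinates `ℝⁿ ≅ ℝ × Y` taking `v` to `(1, 0)`,
Fubini writes the volume of `K_t` as an integral over `y ∈ Y` of the lengths of the segments
`{r + s t : ((r, y), s) ∈ conv {(xᵢ, λᵢ)}}`. Such a length is the maximum minus the minimum of a
family of affine functions of `t`, hence convex in `t`; integration preserves convexity, and the
change of coordinates multiplies all volumes by the same constant.
-/

section ShadowMap

variable {F : Type*} [NormedAddCommGroup F] [NormedSpace ℝ F]

def shadowMap (v : F) (t : ℝ) : F × ℝ →L[ℝ] F :=
  ContinuousLinearMap.fst ℝ F ℝ + t • (ContinuousLinearMap.snd ℝ F ℝ).smulRight v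

@[simp]
theorem shadowMap_apply (v : F) (t : ℝ) (p : F × ℝ) : shadowMap v t p = p.1 + (p.2 * t) • v := by
  simp [shadowMap, smul_smul, mul_comm]

theorem shadowMap_affineCombination (v : F) {a b : ℝ} (hab : a + b = 1) (t₀ t₁ : ℝ) :
    shadowMap v (a * t₀ + b * t₁) = a • shadowMap v t₀ + b • shadowMap v t₁ :=
  ContinuousLinearMap.ext fun p => by
    simp only [add_apply, smul_apply, shadowMap_apply]
    linear_combination (norm := module) (-hab) • p.1

theorem shadowMap_prodMap {G : Type*} [NormedAddCommGroup G] [NormedSpace ℝ G] (L : G →L[ℝ] F)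
    (w : G) (t : ℝ) (p : G × ℝ) : shadowMap (L w) t (Prod.map L id p) = L (shadowMap w t p) := by
  simp

end ShadowMap

theorem IsCompact.volume_eq_ofReal_sSup_sub_sInf {S : Set ℝ} (hS : IsCompact S)
    (hconv : Convex ℝ S) : volume S = ENNReal.ofReal (sSup S - sInf S) := by
  rcases S.eq_empty_or_nonempty with rfl | hne
  · simp
  · conv_lhs => rw [eq_Icc_of_connected_compact ⟨hne, hconv.isPreconnected⟩ hS]
    exact Real.volume_Icc

section PlanarShadow

variable {D : Set (ℝ × ℝ)} {a b : ℝ}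

theorem csSup_image_shadowMap_le (hD : IsCompact D) (hne : D.Nonempty) (ha : 0 ≤ a) (hb : 0 ≤ b)
    (hab : a + b = 1) (t₀ t₁ : ℝ) :
    sSup (shadowMap 1 (a * t₀ + b * t₁) '' D) ≤
      a * sSup (shadowMap 1 t₀ '' D) + b * sSup (shadowMap 1 t₁ '' D) := by
  refine csSup_le (hne.image _) (forall_mem_image.2 fun p hp => ?_)
  have hbdd : ∀ t, BddAbove (shadowMap (1 : ℝ) t '' D) := fun t =>
    (hD.image (shadowMap 1 t).continuous).bddAbove
  simp only [shadowMap_affineCombination (1 : ℝ) hab, add_apply, smul_apply, smul_eq_mul]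
  gcongr <;> exact le_csSup (hbdd _) (mem_image_of_mem _ hp)

theorem le_csInf_image_shadowMap (hD : IsCompact D) (hne : D.Nonempty) (ha : 0 ≤ a) (hb : 0 ≤ b)
    (hab : a + b = 1) (t₀ t₁ : ℝ) :
    a * sInf (shadowMap 1 t₀ '' D) + b * sInf (shadowMap 1 t₁ '' D) ≤
      sInf (shadowMap 1 (a * t₀ + b * t₁) '' D) := by
  refine le_csInf (hne.image _) (forall_mem_image.2 fun p hp => ?_)
  have hbdd : ∀ t, BddBelow (shadowMap (1 : ℝ) t '' D) := fun t =>
    (hD.image (shadowMap 1 t).continuous).bddBelow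
  simp only [shadowMap_affineCombination (1 : ℝ) hab, add_apply, smul_apply, smul_eq_mul]
  gcongr <;> exact csInf_le (hbdd _) (mem_image_of_mem _ hp)

theorem volume_image_shadowMap_le (hD : IsCompact D) (hconv : Convex ℝ D) (ha : 0 ≤ a)
    (hb : 0 ≤ b) (hab : a + b = 1) (t₀ t₁ : ℝ) :
    volume (shadowMap 1 (a * t₀ + b * t₁) '' D) ≤
      ENNReal.ofReal a * volume (shadowMap 1 t₀ '' D) +
        ENNReal.ofReal b * volume (shadowMap 1 t₁ '' D) := by
  rcases D.eq_empty_or_nonempty with rfl | hne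
  · simp
  set width : ℝ → ℝ := fun t => sSup (shadowMap (1 : ℝ) t '' D) - sInf (shadowMap (1 : ℝ) t '' D)
  have hvol : ∀ t, volume (shadowMap (1 : ℝ) t '' D) = ENNReal.ofReal (width t) := fun t =>
    (hD.image (shadowMap 1 t).continuous).volume_eq_ofReal_sSup_sub_sInf
      (hconv.linear_image (shadowMap 1 t).toLinearMap)
  have hsup := csSup_image_shadowMap_le hD hne ha hb hab t₀ t₁
  have hinf := le_csInf_image_shadowMap hD hne ha hb hab t₀ t₁
  simp only [hvol]
  calc ENNReal.ofReal (width (a * t₀ + b * t₁))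
      ≤ ENNReal.ofReal (a * width t₀ + b * width t₁) :=
        ENNReal.ofReal_le_ofReal (by simp only [width]; linarith)
    _ ≤ ENNReal.ofReal (a * width t₀) + ENNReal.ofReal (b * width t₁) := ENNReal.ofReal_add_le
    _ = _ := by rw [ENNReal.ofReal_mul ha, ENNReal.ofReal_mul hb]

end PlanarShadow

section Slices

variable {Y : Type*}

def planarSlice (S : Set ((ℝ × Y) × ℝ)) (y : Y) : Set (ℝ × ℝ) := {p | ((p.1, y), p.2) ∈ S}

theorem isCompact_planarSlice [TopologicalSpace Y] [T2Space Y] {S : Set ((ℝ × Y) × ℝ)}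
    (hS : IsCompact S) (y : Y) : IsCompact (planarSlice S y) := by
  refine (hS.image (continuous_fst.fst.prodMk continuous_snd)).of_isClosed_subset ?_
    fun p hp => ⟨_, hp, rfl⟩
  exact hS.isClosed.preimage ((continuous_fst.prodMk continuous_const).prodMk continuous_snd)

theorem convex_planarSlice [AddCommGroup Y] [Module ℝ Y] {S : Set ((ℝ × Y) × ℝ)}
    (hS : Convex ℝ S) (y : Y) : Convex ℝ (planarSlice S y) := by
  intro p hp q hq a b ha hb hab
  convert hS hp hq ha hb hab using 1
  simp [planarSlice, ← add_smul, hab]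

theorem preimage_prodMk_image_shadowMap [NormedAddCommGroup Y] [NormedSpace ℝ Y]
    (S : Set ((ℝ × Y) × ℝ)) (t : ℝ) (y : Y) :
    (fun r => (r, y)) ⁻¹' (shadowMap ((1 : ℝ), (0 : Y)) t '' S) =
      shadowMap (1 : ℝ) t '' planarSlice S y := by
  ext r
  simp [planarSlice]

end Slices

theorem measure_prod_image_shadowMap_le {Y : Type*} [NormedAddCommGroup Y] [NormedSpace ℝ Y]
    [MeasurableSpace Y] [BorelSpace Y] (μ : Measure Y) [SFinite μ] {S : Set ((ℝ × Y) × ℝ)}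
    (hS : IsCompact S) (hconv : Convex ℝ S) {a b : ℝ} (ha : 0 ≤ a) (hb : 0 ≤ b)
    (hab : a + b = 1) (t₀ t₁ : ℝ) :
    (volume.prod μ) (shadowMap ((1 : ℝ), (0 : Y)) (a * t₀ + b * t₁) '' S) ≤
      ENNReal.ofReal a * (volume.prod μ) (shadowMap ((1 : ℝ), (0 : Y)) t₀ '' S) +
        ENNReal.ofReal b * (volume.prod μ) (shadowMap ((1 : ℝ), (0 : Y)) t₁ '' S) := by
  have hmeas : ∀ t, MeasurableSet (shadowMap ((1 : ℝ), (0 : Y)) t '' S) := fun t =>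
    (hS.image (shadowMap _ t).continuous).isClosed.measurableSet
  have hsliceMeas : ∀ t, Measurable fun y =>
      volume ((fun r => (r, y)) ⁻¹' (shadowMap ((1 : ℝ), (0 : Y)) t '' S)) := fun t =>
    measurable_measure_prodMk_right (hmeas t)
  simp only [Measure.prod_apply_symm (hmeas _)]
  rw [← lintegral_const_mul _ (hsliceMeas t₀), ← lintegral_const_mul _ (hsliceMeas t₁),
    ← lintegral_add_left ((hsliceMeas t₀).const_mul _)]
  refine lintegral_mono fun y => ?_
  simp only [preimage_prodMk_image_shadowMap]
  exact volume_image_shadowMap_le (isCompact_planarSlice hS y) (convex_planarSlice hconv y)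
    ha hb hab t₀ t₁

theorem convexOn_toReal_of_le {V : Type*} [AddCommGroup V] [Module ℝ V] {s : Set V}
    (hs : Convex ℝ s) {f : V → ENNReal} (hf : ∀ x ∈ s, f x ≠ ⊤)
    (h : ∀ x ∈ s, ∀ y ∈ s, ∀ a b : ℝ, 0 ≤ a → 0 ≤ b → a + b = 1 →
      f (a • x + b • y) ≤ ENNReal.ofReal a * f x + ENNReal.ofReal b * f y) :
    ConvexOn ℝ s fun x => (f x).toReal := by
  refine ⟨hs, fun x hx y hy a b ha hb hab => ?_⟩
  have hax : ENNReal.ofReal a * f x ≠ ⊤ := ENNReal.mul_ne_top ENNReal.ofReal_ne_top (hf x hx)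
  have hby : ENNReal.ofReal b * f y ≠ ⊤ := ENNReal.mul_ne_top ENNReal.ofReal_ne_top (hf y hy)
  have := ENNReal.toReal_mono (ENNReal.add_ne_top.2 ⟨hax, hby⟩) (h x hx y hy a b ha hb hab)
  rwa [ENNReal.toReal_add hax hby, ENNReal.toReal_mul, ENNReal.toReal_mul,
    ENNReal.toReal_ofReal ha, ENNReal.toReal_ofReal hb] at this

section FiniteDimensional

variable {F G : Type*} [NormedAddCommGroup F] [NormedSpace ℝ F] [FiniteDimensional ℝ F]
  [NormedAddCommGroup G] [NormedSpace ℝ G]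

theorem Convex.addHaar_closure [MeasurableSpace F] [BorelSpace F] (μ : Measure F)
    [μ.IsAddHaarMeasure] {s : Set F} (hs : Convex ℝ s) : μ (closure s) = μ s := by
  refine le_antisymm ?_ (measure_mono subset_closure)
  calc μ (closure s) ≤ μ s + μ (frontier s) := by
        rw [closure_eq_self_union_frontier]; exact measure_union_le _ _
    _ = μ s := by rw [hs.addHaar_frontier μ, add_zero]

theorem addHaar_image_closure_of_convex [FiniteDimensional ℝ G] [MeasurableSpace G]
    [BorelSpace G] (μ : Measure G) [μ.IsAddHaarMeasure] (P : F →L[ℝ] G) {s : Set F} (hb : Bornology.IsBounded s)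
    (hs : Convex ℝ s) : μ (P '' closure s) = μ (P '' s) := by
  rw [image_closure_of_isCompact hb.isCompact_closure P.continuous.continuousOn]
  exact (hs.linear_image P.toLinearMap).addHaar_closure μ

theorem exists_addHaar_image_eq_mul [MeasurableSpace F] [BorelSpace F] [MeasurableSpace G]
    [BorelSpace G] (μ : Measure G) [μ.IsAddHaarMeasure] (ν : Measure F) [ν.IsAddHaarMeasure]
    (M : F ≃L[ℝ] G) : ∃ c : NNReal, ∀ A, μ (M '' A) = c * ν A := by
  refine ⟨(μ.map M.symm).addHaarScalarFactor ν, fun A => ?_⟩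
  have hmap : μ.map M.symm A = μ (M.symm ⁻¹' A) :=
    M.symm.toHomeomorph.toMeasurableEquiv.map_apply A
  rw [M.image_eq_preimage_symm, ← hmap]
  conv_lhs => rw [Measure.isAddLeftInvariant_eq_smul (μ.map M.symm) ν]
  rfl

theorem exists_continuousLinearEquiv_prod_apply_one_zero {v : F} (hv : v ≠ 0) :
    ∃ (Y : Submodule ℝ F) (M : (ℝ × Y) ≃L[ℝ] F), M (1, 0) = v := by
  obtain ⟨Y, hY⟩ := (ℝ ∙ v).exists_isCompl
  let M : (ℝ × Y) ≃ₗ[ℝ] F := ((LinearEquiv.toSpanNonzeroSingleton ℝ F v hv).prodCongr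
    (LinearEquiv.refl ℝ Y)).trans (Submodule.prodEquivOfIsCompl _ _ hY)
  exact ⟨Y, M.toContinuousLinearEquiv, by simp [M]⟩

end FiniteDimensional

theorem convexOn_addHaar_image_shadowMap {F : Type*} [NormedAddCommGroup F] [NormedSpace ℝ F]
    [FiniteDimensional ℝ F] [MeasurableSpace F] [BorelSpace F] (μ : Measure F)
    [μ.IsAddHaarMeasure] (v : F) {S : Set (F × ℝ)} (hb : Bornology.IsBounded S)
    (hs : Convex ℝ S) : ConvexOn ℝ univ fun t => (μ (shadowMap v t '' S)).toReal := by
  rcases eq_or_ne v 0 with rfl | hv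
  · have hconst : ∀ t, shadowMap (0 : F) t = shadowMap 0 0 := fun t =>
      ContinuousLinearMap.ext fun p => by simp
    simp only [hconst]
    exact convexOn_const _ convex_univ
  obtain ⟨Y, M, hM⟩ := exists_continuousLinearEquiv_prod_apply_one_zero hv
  let ν : Measure (ℝ × Y) := volume.prod Measure.addHaar
  obtain ⟨c, hc⟩ := exists_addHaar_image_eq_mul μ ν M
  let e := M.prodCongr (ContinuousLinearEquiv.refl ℝ ℝ)
  let S' := e ⁻¹' closure S
  have hS' : IsCompact S' := e.toHomeomorph.isCompact_preimage.2 hb.isCompact_closure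
  have hmeasure : ∀ t, μ (shadowMap v t '' S) = c * ν (shadowMap ((1 : ℝ), (0 : Y)) t '' S') := by
    intro t
    rw [← addHaar_image_closure_of_convex μ _ hb hs, ← e.image_preimage (closure S), image_image,
      ← hc, image_image, ← hM]
    congr 1
    exact image_congr fun p _ => shadowMap_prodMap (M : (ℝ × Y) →L[ℝ] F) _ t p
  simp_rw [hmeasure, ENNReal.toReal_mul, ENNReal.coe_toReal]
  have hS'conv : Convex ℝ S' := hs.closure.linear_preimage e.toLinearMap
  exact ConvexOn.smul c.2 (convexOn_toReal_of_le convex_univ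
    (fun t _ => (hS'.image (shadowMap _ t).continuous).measure_lt_top.ne)
    fun t₀ _ t₁ _ _ _ ha hb hab => measure_prod_image_shadowMap_le _ hS' hS'conv ha hb hab t₀ t₁)

theorem lps_volume_convexOn_general {n : ℕ} {ι : Type*}
    (x : ι → E n) (lam : ι → ℝ) (v : E n)
    (hxb : Bornology.IsBounded (Set.range x)) (hlb : Bornology.IsBounded (Set.range lam)) :
    ConvexOn ℝ Set.univ
      (fun t : ℝ =>
        (volume (convexHull ℝ (Set.range fun i => x i + (lam i * t) • v))).toReal) := by
  have hK : ∀ t : ℝ, convexHull ℝ (range fun i => x i + (lam i * t) • v) =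
      shadowMap v t '' convexHull ℝ (range fun i => (x i, lam i)) := fun t => by
    rw [← ContinuousLinearMap.coe_coe, LinearMap.image_convexHull, ← range_comp]
    simp [Function.comp_def]
  simp_rw [hK]
  refine convexOn_addHaar_image_shadowMap volume v ?_ (convex_convexHull ℝ _)
  exact isBounded_convexHull.2
    ((hxb.prod hlb).subset (range_subset_iff.2 fun i => ⟨⟨i, rfl⟩, i, rfl⟩))

/-- Rogers–Shephard: the volume of a linear parameter system is a convex function of `t`. -/
theorem lps_volume_convexOn {n : ℕ} {ι : Type*} [Nonempty ι]
    (x : ι → E n) (lam : ι → ℝ) (v : E n)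
    (hxb : Bornology.IsBounded (Set.range x)) (hlb : Bornology.IsBounded (Set.range lam)) :
    ConvexOn ℝ Set.univ
      (fun t : ℝ =>
        (volume (convexHull ℝ (Set.range fun i => x i + (lam i * t) • v))).toReal) :=
  lps_volume_convexOn_general x lam v hxb hlb
end

section
/- For a convex body K in R^2 containing the origin, V_2(K +_1 (−K)) ≤ 6 V_2(K) (the case p = 1 of the planar p-Rogers–Shephard inequality, i.e. the planar Rogers–Shephard inequality), with equality when K is a triangle. -/
open MeasureTheory Set Real Pointwise Filter

/-!
For `p = 1` the Firey sum `K +₁ (-K)` is the difference body `D = K - K`: a point outside the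
closed convex set `D` is separated from it by a hyperplane, and the support functions of `K` and
`-K` add up to that of `D`.

By Fubini, `φ x = vol (K ∩ (K - x))` integrates to `vol K ^ 2`. If `x = r • (p - q)` with
`p, q ∈ K` and `0 ≤ r ≤ 1`, then `K ∩ (K - x)` contains `r • q + (1 - r) • K`; since `x ∈ g x • D`
for the gauge `g` of `D`, this gives `φ x ≥ (1 - g x) ^ d * vol K` on `D`. The layer-cake formula
bounds `∫_D (1 - g) ^ d` below by `vol D * ∫₀¹ (1 - t ^ (1 / d)) ^ d dt`, which is `vol D / 6`
for `d = 2`.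

For a triangle, `K` and `K - K` are images under affine maps with the same linear part of the
standard triangle (area `1 / 2`) and of the hexagon `{|x|, |y|, |x + y| ≤ 1}` (area `3`).
-/

open scoped Topology ENNReal
open Module

theorem IsCompact.sub {G : Type*} [TopologicalSpace G] [AddGroup G] [IsTopologicalAddGroup G]
    {s t : Set G} (hs : IsCompact s) (ht : IsCompact t) : IsCompact (s - t) := by
  simpa only [sub_eq_add_neg] using hs.add ht.neg

section SupportFunction

variable {n : ℕ} {K : Set (E n)}

lemma le_supp (hK : IsCompact K) {a : E n} (ha : a ∈ K) (u : E n) : inner ℝ a u ≤ supp K u :=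
  le_csSup ((hK.image (by fun_prop : Continuous fun x : E n ↦ inner ℝ x u)).bddAbove)
    ⟨a, ha, rfl⟩

lemma exists_supp_eq_inner (hK : IsCompact K) (hne : K.Nonempty) (u : E n) :
    ∃ a ∈ K, supp K u = inner ℝ a u := by
  obtain ⟨a, haK, hmax⟩ := hK.exists_isMaxOn hne
    (by fun_prop : Continuous fun x : E n ↦ inner ℝ x u).continuousOn
  exact ⟨a, haK, IsGreatest.csSup_eq ⟨⟨a, haK, rfl⟩, by rintro _ ⟨y, hy, rfl⟩; exact hmax hy⟩⟩

theorem pSum_one_neg_eq_sub (hco : Convex ℝ K) (hcp : IsCompact K) (hne : K.Nonempty) :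
    pSum K (-K) 1 = K - K := by
  ext x
  simp only [pSum, Real.rpow_one, div_one, Set.mem_ofPred_eq]
  constructor
  · intro hx
    by_contra hxD
    obtain ⟨f, s, hf, hfx⟩ := geometric_hahn_banach_closed_point (hco.sub hco)
      (hcp.sub hcp).isClosed hxD
    set u := (InnerProductSpace.toDual ℝ (E n)).symm f
    have hfu (y : E n) : f y = inner ℝ y u := by
      rw [real_inner_comm]; exact InnerProductSpace.toDual_symm_apply.symm
    obtain ⟨a, ha, hau⟩ := exists_supp_eq_inner hcp hne u
    obtain ⟨b, hb, hbu⟩ := exists_supp_eq_inner hcp.neg hne.neg u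
    have hab : a + b ∈ K - K := by
      rw [sub_eq_add_neg]; exact Set.add_mem_add ha hb
    have hxu := hx u
    rw [hau, hbu, ← inner_add_left] at hxu
    have hsep := hf _ hab
    rw [hfu] at hsep hfx
    linarith
  · rintro ⟨p, hp, q, hq, rfl⟩ u
    dsimp only
    rw [show p - q = p + -q from sub_eq_add_neg p q, inner_add_left]
    exact add_le_add (le_supp hcp hp u) (le_supp hcp.neg (by simpa using hq) u)

end SupportFunction

theorem MeasureTheory.lintegral_measure_inter_add_mem {G : Type*} [AddGroup G] [MeasurableSpace G]
    [MeasurableAdd₂ G] {μ : Measure G} [SFinite μ] [μ.IsAddLeftInvariant] {K : Set G}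
    (hK : MeasurableSet K) :
    ∫⁻ x, μ {y | y ∈ K ∧ y + x ∈ K} ∂μ = μ K * μ K := by
  have hW : MeasurableSet {p : G × G | p.2 ∈ K ∧ p.2 + p.1 ∈ K} :=
    (measurable_snd hK).inter ((measurable_snd.add measurable_fst) hK)
  have hsection (y : G) : μ {x | y ∈ K ∧ y + x ∈ K} = K.indicator (fun _ ↦ μ K) y := by
    by_cases hy : y ∈ K
    · simp only [hy, true_and, Set.indicator_of_mem]
      exact measure_preimage_add μ y K
    · simp [hy]
  calc ∫⁻ x, μ {y | y ∈ K ∧ y + x ∈ K} ∂μ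
      = μ.prod μ {p : G × G | p.2 ∈ K ∧ p.2 + p.1 ∈ K} := (Measure.prod_apply hW).symm
    _ = ∫⁻ y, K.indicator (fun _ ↦ μ K) y ∂μ := by
      rw [Measure.prod_apply_symm hW]; exact lintegral_congr hsection
    _ = μ K * μ K := by rw [lintegral_indicator_const hK, mul_comm]

lemma mem_gauge_smul_self {V : Type*} [NormedAddCommGroup V] [NormedSpace ℝ V] {D : Set V}
    (hc : Convex ℝ D) (hcl : IsClosed D)
    (hb : Bornology.IsBounded D) (h0 : D ∈ 𝓝 0) (x : V) : x ∈ gauge D x • D := by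
  have habs : Absorbent ℝ D := absorbent_nhds_zero h0
  rcases eq_or_ne x 0 with rfl | hx
  · simpa using Set.zero_mem_smul_set (mem_of_mem_nhds h0)
  · have hpos : 0 < gauge D x := (gauge_pos habs ((NormedSpace.isVonNBounded_iff ℝ).2 hb)).2 hx
    have hunit : gauge D ((gauge D x)⁻¹ • x) ≤ 1 := by
      rw [gauge_smul_of_nonneg (inv_nonneg.2 hpos.le), smul_eq_mul, inv_mul_cancel₀ hpos.ne']
    have hmem := (gauge_le_one_iff_mem_closure hc h0).1 hunit
    rw [hcl.closure_eq] at hmem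
    simpa [smul_smul, mul_inv_cancel₀ hpos.ne'] using Set.smul_mem_smul_set (a := gauge D x) hmem

/-- Equal to `1 / (2d choose d)`. -/
noncomputable def rogersShephardConst (d : ℕ) : ℝ≥0∞ :=
  ∫⁻ t in Ioo 0 1, ENNReal.ofReal ((1 - t ^ (d⁻¹ : ℝ)) ^ d)

section RogersShephard

variable {V : Type*} [NormedAddCommGroup V] [NormedSpace ℝ V] [FiniteDimensional ℝ V]
  [MeasurableSpace V] [BorelSpace V] {μ : Measure V} [μ.IsAddHaarMeasure] {K D : Set V}

lemma ofReal_one_sub_pow_mul_le_measure_inter_add_mem (hK : Convex ℝ K) {r : ℝ} (hr0 : 0 ≤ r)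
    (hr1 : r ≤ 1) {x : V} (hx : x ∈ r • (K - K)) :
    ENNReal.ofReal ((1 - r) ^ finrank ℝ V) * μ K ≤ μ {y | y ∈ K ∧ y + x ∈ K} := by
  obtain ⟨_, ⟨p, hp, q, hq, rfl⟩, rfl⟩ := hx
  have hr1' : 0 ≤ 1 - r := sub_nonneg.2 hr1
  have hsub : r • q +ᵥ (1 - r) • K ⊆ {y | y ∈ K ∧ y + r • (p - q) ∈ K} := by
    rintro _ ⟨_, ⟨k, hk, rfl⟩, rfl⟩
    refine ⟨hK hq hk hr0 hr1' (by ring), ?_⟩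
    convert hK hp hk hr0 hr1' (by ring) using 1
    simp only [vadd_eq_add, smul_sub]
    abel
  calc ENNReal.ofReal ((1 - r) ^ finrank ℝ V) * μ K = μ (r • q +ᵥ (1 - r) • K) := by
        rw [measure_vadd, Measure.addHaar_smul_of_nonneg μ hr1']
    _ ≤ _ := measure_mono hsub

lemma ofReal_mul_le_measure_gauge_superlevel [Nontrivial V] (hD : Convex ℝ D) (h0 : (0 : V) ∈ D)
    {t : ℝ} (ht0 : 0 < t) (ht1 : t < 1) :
    ENNReal.ofReal ((1 - t ^ ((finrank ℝ V)⁻¹ : ℝ)) ^ finrank ℝ V) * μ D ≤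
      μ ({x | t < (1 - gauge D x) ^ finrank ℝ V} ∩ D) := by
  set d := finrank ℝ V
  have hd : d ≠ 0 := finrank_pos.ne'
  set ρ := 1 - t ^ (d⁻¹ : ℝ)
  have hroot0 : 0 < t ^ (d⁻¹ : ℝ) := Real.rpow_pos_of_pos ht0 _
  have hroot1 : t ^ (d⁻¹ : ℝ) < 1 := Real.rpow_lt_one ht0.le ht1 (by positivity)
  have hρ0 : 0 < ρ := sub_pos.2 hroot1
  have hsub : ρ • interior D ⊆ {x | t < (1 - gauge D x) ^ d} ∩ D := by
    rintro _ ⟨y, hy, rfl⟩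
    have hgy : gauge D y < 1 := interior_subset_gauge_lt_one D hy
    have hg : gauge D (ρ • y) = ρ * gauge D y := by
      rw [gauge_smul_of_nonneg hρ0.le, smul_eq_mul]
    refine ⟨?_, hD.smul_mem_of_zero_mem h0 (interior_subset hy) ⟨hρ0.le, by linarith⟩⟩
    calc t = (t ^ (d⁻¹ : ℝ)) ^ d := (Real.rpow_inv_natCast_pow ht0.le hd).symm
      _ < (1 - gauge D (ρ • y)) ^ d := by
        gcongr
        rw [hg]
        nlinarith [gauge_nonneg (s := D) y]
  calc ENNReal.ofReal (ρ ^ d) * μ D = μ (ρ • interior D) := by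
        rw [Measure.addHaar_smul_of_nonneg μ hρ0.le,
          measure_interior_of_null_frontier (hD.addHaar_frontier μ)]
    _ ≤ _ := measure_mono hsub

lemma mul_rogersShephardConst_le_lintegral_gauge [Nontrivial V] (hD : Convex ℝ D)
    (h0 : D ∈ 𝓝 0) :
    μ D * rogersShephardConst (finrank ℝ V) ≤
      ∫⁻ x in D, ENNReal.ofReal ((1 - gauge D x) ^ finrank ℝ V) ∂μ := by
  set d := finrank ℝ V
  have hgauge : Continuous (gauge D) := continuous_gauge hD h0
  have hnonneg : 0 ≤ᵐ[μ.restrict D] fun x ↦ (1 - gauge D x) ^ d :=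
    (ae_restrict_iff'₀ (hD.nullMeasurableSet μ)).2 <| Eventually.of_forall fun x hx ↦
      pow_nonneg (sub_nonneg.2 (gauge_le_one_of_mem hx)) d
  calc μ D * rogersShephardConst d
      = ∫⁻ t in Ioo 0 1, ENNReal.ofReal ((1 - t ^ (d⁻¹ : ℝ)) ^ d) * μ D := by
        rw [rogersShephardConst, lintegral_mul_const _ (by fun_prop), mul_comm]
    _ ≤ ∫⁻ t in Ioo 0 1, μ.restrict D {x | t < (1 - gauge D x) ^ d} :=
        setLIntegral_mono' measurableSet_Ioo fun t ht ↦
          (ofReal_mul_le_measure_gauge_superlevel hD (mem_of_mem_nhds h0) ht.1 ht.2).trans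
            (Measure.le_restrict_apply _ _)
    _ ≤ ∫⁻ t in Ioi 0, μ.restrict D {x | t < (1 - gauge D x) ^ d} :=
        lintegral_mono_set Ioo_subset_Ioi_self
    _ = ∫⁻ x in D, ENNReal.ofReal ((1 - gauge D x) ^ d) ∂μ :=
        (lintegral_eq_lintegral_meas_lt _ hnonneg (by fun_prop)).symm

theorem measure_sub_self_mul_rogersShephardConst_le [Nontrivial V] (hco : Convex ℝ K)
    (hcp : IsCompact K) (hK : μ K ≠ 0) :
    μ (K - K) * rogersShephardConst (finrank ℝ V) ≤ μ K := by
  set D := K - K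
  set d := finrank ℝ V
  have hDc : Convex ℝ D := hco.sub hco
  have hDcp : IsCompact D := hcp.sub hcp
  have hD0 : D ∈ 𝓝 0 :=
    Measure.sub_mem_nhds_zero_of_addHaar_pos μ K hcp.measurableSet (pos_iff_ne_zero.2 hK)
  have hpointwise : ∀ x ∈ D, ENNReal.ofReal ((1 - gauge D x) ^ d) * μ K ≤
      μ {y | y ∈ K ∧ y + x ∈ K} := fun x hx ↦
    ofReal_one_sub_pow_mul_le_measure_inter_add_mem hco (gauge_nonneg x)
      (gauge_le_one_of_mem hx)
      (mem_gauge_smul_self hDc hDcp.isClosed hDcp.isBounded hD0 x)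
  have hKK : μ D * rogersShephardConst d * μ K ≤ μ K * μ K :=
    calc μ D * rogersShephardConst d * μ K
        ≤ (∫⁻ x in D, ENNReal.ofReal ((1 - gauge D x) ^ d) ∂μ) * μ K := by
          gcongr; exact mul_rogersShephardConst_le_lintegral_gauge hDc hD0
      _ = ∫⁻ x in D, ENNReal.ofReal ((1 - gauge D x) ^ d) * μ K ∂μ := by
          have hgauge := continuous_gauge hDc hD0
          rw [lintegral_mul_const _ (by fun_prop)]
      _ ≤ ∫⁻ x in D, μ {y | y ∈ K ∧ y + x ∈ K} ∂μ :=
          setLIntegral_mono_ae' hDcp.measurableSet (Eventually.of_forall hpointwise)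
      _ ≤ ∫⁻ x, μ {y | y ∈ K ∧ y + x ∈ K} ∂μ := setLIntegral_le_lintegral _ _
      _ = μ K * μ K := lintegral_measure_inter_add_mem hcp.measurableSet
  exact (ENNReal.mul_le_mul_iff_left hK hcp.measure_lt_top.ne).1 hKK

end RogersShephard

lemma integral_one_sub_rpow_inv_two_sq : ∫ t in (0 : ℝ)..1, (1 - t ^ (2⁻¹ : ℝ)) ^ 2 = 6⁻¹ := by
  have hexpand : ∀ t ∈ uIcc (0 : ℝ) 1,
      (1 - t ^ (2⁻¹ : ℝ)) ^ 2 = 1 + t - 2 * t ^ (2⁻¹ : ℝ) := by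
    intro t ht
    have hsq : (t ^ (2⁻¹ : ℝ)) ^ 2 = t :=
      Real.rpow_inv_natCast_pow (n := 2) (uIcc_of_le (zero_le_one' ℝ) ▸ ht).1 two_ne_zero
    linear_combination hsq
  rw [intervalIntegral.integral_congr hexpand, intervalIntegral.integral_sub
    (intervalIntegrable_const.add intervalIntegral.intervalIntegrable_id)
    ((intervalIntegral.intervalIntegrable_rpow' (by norm_num)).const_mul 2),
    intervalIntegral.integral_add intervalIntegrable_const intervalIntegral.intervalIntegrable_id,
    intervalIntegral.integral_const_mul,
    integral_rpow (Or.inl (by norm_num)), integral_id]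
  norm_num

lemma rogersShephardConst_two : rogersShephardConst 2 = 6⁻¹ := by
  have hcont : Continuous fun t : ℝ ↦ (1 - t ^ (2⁻¹ : ℝ)) ^ 2 := by
    have hrpow := Real.continuous_rpow_const (q := (2⁻¹ : ℝ)) (by norm_num)
    fun_prop
  rw [rogersShephardConst, Nat.cast_ofNat, ← ofReal_integral_eq_lintegral_ofReal
    (hcont.integrableOn_Icc.mono_set Ioo_subset_Icc_self)
    (Eventually.of_forall fun _ ↦ sq_nonneg _),
    ← integral_Ioc_eq_integral_Ioo, ← intervalIntegral.integral_of_le zero_le_one,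
    integral_one_sub_rpow_inv_two_sq, ENNReal.ofReal_inv_of_pos (by norm_num)]
  norm_num

theorem MeasureTheory.Measure.prod_setOf_mem_Icc {α : Type*} [MeasurableSpace α] {μ : Measure α}
    [SFinite μ] {f g : α → ℝ} (hf : Measurable f) (hg : Measurable g) {s : Set α}
    (hs : MeasurableSet s) :
    μ.prod volume {p : α × ℝ | p.1 ∈ s ∧ p.2 ∈ Icc (f p.1) (g p.1)} =
      ∫⁻ x in s, ENNReal.ofReal (g x - f x) ∂μ := by
  rw [Measure.prod_apply (measurableSet_region_between_cc hf hg hs),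
    ← lintegral_indicator hs]
  congr 1 with x
  by_cases hx : x ∈ s
  · rw [Set.indicator_of_mem hx, ← Real.volume_Icc]
    congr 1 with y
    simp [hx]
  · simp [hx]

lemma volume_setOf_mem_Icc_Icc {a b : ℝ} (hab : a ≤ b) {f g : ℝ → ℝ} (hf : Continuous f)
    (hg : Continuous g) (hfg : ∀ x ∈ Icc a b, f x ≤ g x) :
    volume {p : ℝ × ℝ | p.1 ∈ Icc a b ∧ p.2 ∈ Icc (f p.1) (g p.1)} =
      ENNReal.ofReal (∫ x in a..b, g x - f x) := by
  rw [Measure.volume_eq_prod, Measure.prod_setOf_mem_Icc hf.measurable hg.measurable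
    measurableSet_Icc, ← ofReal_integral_eq_lintegral_ofReal (f := fun x ↦ g x - f x)
    (hg.sub hf).integrableOn_Icc
    ((ae_restrict_iff' measurableSet_Icc).2 (Eventually.of_forall fun x hx ↦
      sub_nonneg.2 (hfg x hx))),
    integral_Icc_eq_integral_Ioc, ← intervalIntegral.integral_of_le hab]

theorem Set.vadd_set_sub_vadd_set {G : Type*} [AddCommGroup G] (a : G) (s : Set G) :
    (a +ᵥ s) - (a +ᵥ s) = s - s := by
  ext; simp [Set.mem_sub, Set.mem_vadd_set]

def stdTriangle : Set (ℝ × ℝ) := {p | 0 ≤ p.1 ∧ 0 ≤ p.2 ∧ p.1 + p.2 ≤ 1}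

def stdHexagon : Set (ℝ × ℝ) := {p | |p.1| ≤ 1 ∧ |p.2| ≤ 1 ∧ |p.1 + p.2| ≤ 1}

lemma convex_stdTriangle : Convex ℝ stdTriangle := by
  rintro x ⟨hx₁, hx₂, hx⟩ y ⟨hy₁, hy₂, hy⟩ s t hs ht hst
  refine ⟨?_, ?_, ?_⟩ <;> simp only [Prod.fst_add, Prod.snd_add, Prod.smul_fst, Prod.smul_snd,
    smul_eq_mul] <;> nlinarith

lemma convexHull_triple_eq_vadd_image_stdTriangle {V : Type*} [AddCommGroup V] [Module ℝ V]
    (a b c : V) :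
    convexHull ℝ {a, b, c} = a +ᵥ
      ((LinearMap.toSpanSingleton ℝ V (b - a)).coprod (LinearMap.toSpanSingleton ℝ V (c - a)))
        '' stdTriangle := by
  apply subset_antisymm
  · refine convexHull_min ?_ ((convex_stdTriangle.linear_image _).vadd a)
    simp only [Set.insert_subset_iff, Set.singleton_subset_iff]
    refine ⟨?_, ?_, ?_⟩
    · exact ⟨0, ⟨0, by simp [stdTriangle]⟩, by simp⟩
    · exact ⟨b - a, ⟨(1, 0), by simp [stdTriangle]⟩, by simp⟩
    · exact ⟨c - a, ⟨(0, 1), by simp [stdTriangle]⟩, by simp⟩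
  · rintro _ ⟨_, ⟨⟨s, t⟩, ⟨hs, ht, hst⟩, rfl⟩, rfl⟩
    refine mem_convexHull_of_exists_fintype ![1 - s - t, s, t] ![a, b, c] ?_ ?_ ?_ ?_
    · intro i; fin_cases i <;> simp <;> linarith
    · simp only [Fin.sum_univ_three, Fin.isValue, Matrix.cons_val_zero, Matrix.cons_val_one,
        Matrix.cons_val]
      ring
    · intro i; fin_cases i <;> simp
    · simp only [Fin.sum_univ_three, LinearMap.coprod_apply, LinearMap.toSpanSingleton_apply,
        vadd_eq_add, Fin.isValue, Matrix.cons_val_zero, Matrix.cons_val_one, Matrix.cons_val]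
      module

lemma stdTriangle_sub_stdTriangle : stdTriangle - stdTriangle = stdHexagon := by
  apply subset_antisymm
  · rintro _ ⟨p, ⟨hp₁, hp₂, hp⟩, q, ⟨hq₁, hq₂, hq⟩, rfl⟩
    simp only [stdHexagon, Set.mem_ofPred_eq, Prod.fst_sub, Prod.snd_sub, abs_le]
    refine ⟨⟨?_, ?_⟩, ⟨?_, ?_⟩, ⟨?_, ?_⟩⟩ <;> linarith
  · rintro ⟨u, v⟩ ⟨hu, hv, huv⟩
    rw [abs_le] at hu hv huv
    rcases le_total 0 u with hu0 | hu0 <;> rcases le_total 0 v with hv0 | hv0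
    · exact ⟨(u, v), ⟨hu0, hv0, by linarith⟩, 0, by simp [stdTriangle], by simp⟩
    · exact ⟨(u, 0), ⟨hu0, le_rfl, by linarith⟩, (0, -v), ⟨le_rfl, by linarith, by linarith⟩,
        by simp⟩
    · exact ⟨(0, v), ⟨le_rfl, hv0, by linarith⟩, (-u, 0), ⟨by linarith, le_rfl, by linarith⟩,
        by simp⟩
    · exact ⟨0, by simp [stdTriangle], (-u, -v), ⟨by linarith, by linarith, by linarith⟩,
        by simp⟩

lemma volume_stdTriangle : volume stdTriangle = 2⁻¹ := by
  have hsections : stdTriangle = {p : ℝ × ℝ | p.1 ∈ Icc 0 1 ∧ p.2 ∈ Icc 0 (1 - p.1)} := by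
    ext ⟨x, y⟩
    simp only [stdTriangle, Set.mem_ofPred_eq, Set.mem_Icc]
    constructor
    · rintro ⟨hx, hy, hxy⟩; exact ⟨⟨hx, by linarith⟩, hy, by linarith⟩
    · rintro ⟨⟨hx, -⟩, hy, hxy⟩; exact ⟨hx, hy, by linarith⟩
  rw [hsections, volume_setOf_mem_Icc_Icc zero_le_one continuous_const (by fun_prop)
    fun x hx ↦ sub_nonneg.2 hx.2]
  norm_num [intervalIntegral.integral_comp_sub_left fun x ↦ x]
  rw [one_div, ENNReal.ofReal_inv_of_pos two_pos, ENNReal.ofReal_ofNat]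

lemma volume_stdHexagon : volume stdHexagon = 3 := by
  have hsections : stdHexagon = {p : ℝ × ℝ | p.1 ∈ Icc (-1) 1 ∧
      p.2 ∈ Icc (max (-1) (-1 - p.1)) (min 1 (1 - p.1))} := by
    ext ⟨x, y⟩
    simp only [stdHexagon, Set.mem_ofPred_eq, Set.mem_Icc, abs_le, max_le_iff, le_min_iff]
    constructor
    · rintro ⟨⟨hx, hx'⟩, ⟨hy, hy'⟩, hxy, hxy'⟩
      exact ⟨⟨hx, hx'⟩, ⟨hy, by linarith⟩, hy', by linarith⟩
    · rintro ⟨⟨hx, hx'⟩, ⟨hy, hy'⟩, hy'', hxy⟩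
      exact ⟨⟨hx, hx'⟩, ⟨hy, hy''⟩, by linarith, by linarith⟩
  have hlength (x : ℝ) : min 1 (1 - x) - max (-1) (-1 - x) = 2 - |x| := by
    rcases le_total 0 x with hx | hx
    · rw [abs_of_nonneg hx, min_eq_right (by linarith), max_eq_left (by linarith)]; ring
    · rw [abs_of_nonpos hx, min_eq_left (by linarith), max_eq_right (by linarith)]; ring
  have hint (a b : ℝ) : IntervalIntegrable (fun x : ℝ ↦ 2 - |x|) volume a b :=
    (continuous_const.sub continuous_abs).intervalIntegrable a b
  rw [hsections, volume_setOf_mem_Icc_Icc (f := fun x ↦ max (-1) (-1 - x))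
    (g := fun x ↦ min 1 (1 - x)) (by norm_num) (by fun_prop) (by fun_prop)
    fun x hx ↦ by linarith [hlength x, abs_le.2 hx], ← ENNReal.ofReal_ofNat 3]
  simp_rw [hlength]
  rw [← intervalIntegral.integral_add_adjacent_intervals (hint (-1) 0) (hint 0 1),
    intervalIntegral.integral_congr (a := -1) (b := 0) (g := fun x ↦ 2 + x) fun x hx ↦ by
      rw [abs_of_nonpos (uIcc_of_le (by norm_num : (-1 : ℝ) ≤ 0) ▸ hx).2, sub_neg_eq_add],
    intervalIntegral.integral_congr (a := 0) (b := 1) (g := fun x ↦ 2 - x) fun x hx ↦ by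
      rw [abs_of_nonneg (uIcc_of_le (zero_le_one' ℝ) ▸ hx).1]]
  norm_num [intervalIntegral.integral_comp_add_left fun x ↦ x,
    intervalIntegral.integral_comp_sub_left fun x ↦ x]

lemma exists_volume_image_eq_mul (A : ℝ × ℝ →ₗ[ℝ] E 2) :
    ∃ c : ℝ≥0∞, ∀ s, volume (A '' s) = c * volume s := by
  let e : E 2 ≃ᵐ ℝ × ℝ := (MeasurableEquiv.toLp 2 (Fin 2 → ℝ)).symm.trans MeasurableEquiv.finTwoArrow
  have he : MeasurePreserving e := (volume_preserving_finTwoArrow ℝ).comp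
    (EuclideanSpace.volume_preserving_symm_measurableEquiv_toLp (Fin 2))
  let L : E 2 →ₗ[ℝ] ℝ × ℝ := (EuclideanSpace.proj 0).toLinearMap.prod
    (EuclideanSpace.proj 1).toLinearMap
  have hL : ⇑L = e := rfl
  refine ⟨ENNReal.ofReal |LinearMap.det (A ∘ₗ L)|, fun s ↦ ?_⟩
  rw [← he.measure_preimage_equiv s, ← Measure.addHaar_image_linearMap, LinearMap.coe_comp,
    Set.image_comp, hL, Set.image_preimage_eq s e.surjective]

theorem volume_convexHull_triple_sub_self (a b c : E 2) :
    volume (convexHull ℝ {a, b, c} - convexHull ℝ {a, b, c}) =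
      6 * volume (convexHull ℝ {a, b, c}) := by
  set A := (LinearMap.toSpanSingleton ℝ (E 2) (b - a)).coprod
    (LinearMap.toSpanSingleton ℝ (E 2) (c - a))
  obtain ⟨k, hk⟩ := exists_volume_image_eq_mul A
  rw [convexHull_triple_eq_vadd_image_stdTriangle, Set.vadd_set_sub_vadd_set, ← Set.image_sub,
    stdTriangle_sub_stdTriangle, measure_vadd, hk, hk, volume_stdTriangle, volume_stdHexagon,
    mul_left_comm]
  congr 1
  rw [show (6 : ℝ≥0∞) = 3 * 2 by norm_num, mul_assoc,
    ENNReal.mul_inv_cancel two_ne_zero ENNReal.ofNat_ne_top, mul_one]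

theorem planar_rogers_shephard_general (K : Set (E 2)) (hKco : Convex ℝ K) (hKcp : IsCompact K)
    (hint : (interior K).Nonempty) :
    volume (pSum K (-K) 1) ≤ 6 * volume K ∧
    (∀ a b c : E 2, AffineIndependent ℝ ![a, b, c] → K = convexHull ℝ {a, b, c} →
      volume (pSum K (-K) 1) = 6 * volume K) := by
  rw [pSum_one_neg_eq_sub hKco hKcp (hint.mono interior_subset)]
  refine ⟨?_, fun a b c _ hK ↦ by subst hK; exact volume_convexHull_triple_sub_self a b c⟩
  have hK : volume K ≠ 0 :=
    ((isOpen_interior.measure_pos volume hint).trans_le (measure_mono interior_subset)).ne'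
  have h := measure_sub_self_mul_rogersShephardConst_le hKco hKcp hK
  rwa [finrank_euclideanSpace_fin, rogersShephardConst_two, ← div_eq_mul_inv,
    ENNReal.div_le_iff (by norm_num) (by norm_num), mul_comm] at h

/-- Planar Rogers–Shephard inequality (`p = 1`): `V₂(K +₁ (−K)) ≤ 6 V₂(K)`, with equality
when `K` is a triangle. -/
theorem planar_rogers_shephard (K : Set (E 2)) (hKco : Convex ℝ K) (hKcp : IsCompact K)
    (h0K : (0 : E 2) ∈ K) (hint : (interior K).Nonempty) :
    volume (pSum K (-K) 1) ≤ 6 * volume K ∧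
    (∀ a b c : E 2, AffineIndependent ℝ ![a, b, c] → K = convexHull ℝ {a, b, c} →
      volume (pSum K (-K) 1) = 6 * volume K) :=
  planar_rogers_shephard_general K hKco hKcp hint
end
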